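/- arXiv:2208.02409 — 2 statements merged into one kernel-verified Lean document; each statement's English description precedes it below -/
import Mathlib

section
/- Let Θ ~ Exp(1) be independent of a σ-algebra 𝒢, let A : [0,T] → [0,∞) be a 𝒢-measurable, continuous, nondecreasing random process with A(0) = 0, and set τ = inf{t ∈ [0,T] : A(t) ≥ Θ} ∧ T. Then for any bounded 𝒢-measurable process h : [0,T] → ℝ that is continuous in t, E[h(τ)] = E[∫₀ᵀ h(u)·e^{−A(u)} dA(u) + h(T)·e^{−A(T)}]. -/
/-!
For a path `A` write `φ(θ) = inf {t ∈ [0, T] : θ ≤ A t} ∧ T`, so that `τ = φ(Θ)`. Since `Θ` is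
independent of `𝒢` and `A`, `h` are `𝒢`-measurable, `E[h(τ)] = E[∫ h(φ θ) e^{-θ} dθ]`, and it
remains to compute the inner integral for a fixed path. On `θ > A T` we have `φ θ = T`, which
contributes `h(T) e^{-A(T)}`. On `(0, A T]` continuity gives `A (φ θ) = θ`, and `φ` pushes
Lebesgue measure on `(0, A T]` forward to `dA` on `(0, T]` because `{θ : φ θ ≤ s} = (0, A s]`;
changing variables yields `∫₀ᵀ h(u) e^{-A(u)} dA(u)`.
-/

open MeasureTheory ProbabilityTheory Real Set

lemma integral_expMeasure {E : Type*} [NormedAddCommGroup E] [NormedSpace ℝ E] {r : ℝ} (hr : 0 < r)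
    (g : ℝ → E) : ∫ x, g x ∂expMeasure r = ∫ x in Ici 0, (r * exp (-(r * x))) • g x := by
  rw [show expMeasure r = volume.withDensity (exponentialPDF r) from rfl,
    integral_withDensity_eq_integral_toReal_smul (f := exponentialPDF r)
      (measurable_exponentialPDFReal r).ennreal_ofReal
      (ae_of_all _ fun _ => ENNReal.ofReal_lt_top), ← integral_indicator measurableSet_Ici]
  congr 1 with x
  rcases lt_or_ge x 0 with hx | hx
  · simp [exponentialPDF_of_neg hx, hx.not_ge]
  · rw [indicator_of_mem (mem_Ici.2 hx), exponentialPDF_of_nonneg hx,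
      ENNReal.toReal_ofReal (by positivity)]

theorem ProbabilityTheory.IndepFun.integral_comp_prodMk {Ω α β E : Type*} {mΩ : MeasurableSpace Ω}
    {mα : MeasurableSpace α} {mβ : MeasurableSpace β} [NormedAddCommGroup E] [NormedSpace ℝ E]
    {μ : Measure Ω} [IsFiniteMeasure μ] {X : Ω → α} {Y : Ω → β} (hXY : IndepFun X Y μ)
    (hX : AEMeasurable X μ) (hY : AEMeasurable Y μ) {F : α × β → E}
    (hF : Integrable F ((μ.map X).prod (μ.map Y))) :
    ∫ ω, F (X ω, Y ω) ∂μ = ∫ ω, ∫ x, F (x, Y ω) ∂(μ.map X) ∂μ := by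
  have hmap := (indepFun_iff_map_prod_eq_prod_map_map hX hY).1 hXY
  calc ∫ ω, F (X ω, Y ω) ∂μ = ∫ p, F p ∂(μ.map X).prod (μ.map Y) := by
        rw [← hmap, integral_map (hX.prodMk hY) (hmap ▸ hF.aestronglyMeasurable)]
    _ = ∫ y, ∫ x, F (x, y) ∂(μ.map X) ∂(μ.map Y) := integral_prod_symm F hF
    _ = ∫ ω, ∫ x, F (x, Y ω) ∂(μ.map X) ∂μ :=
        integral_map hY hF.swap.aestronglyMeasurable.integral_prod_right'

noncomputable def firstPassageTime (A : StieltjesFunction ℝ) (T θ : ℝ) : ℝ :=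
  sInf ({t | t ∈ Icc (0 : ℝ) T ∧ θ ≤ A t} ∪ {T})

section FirstPassageTime

variable {A : StieltjesFunction ℝ} {T θ s : ℝ}

lemma bddBelow_firstPassageSet : BddBelow ({t | t ∈ Icc (0 : ℝ) T ∧ θ ≤ A t} ∪ {T}) :=
  ⟨min 0 T, by rintro t (⟨ht, -⟩ | rfl) <;> simp_all⟩

lemma firstPassageTime_le_of_le (hs : s ∈ Icc 0 T) (hθ : θ ≤ A s) :
    firstPassageTime A T θ ≤ s :=
  csInf_le bddBelow_firstPassageSet (Or.inl ⟨hs, hθ⟩)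

lemma firstPassageTime_le : firstPassageTime A T θ ≤ T :=
  csInf_le bddBelow_firstPassageSet (Or.inr rfl)

lemma firstPassageTime_nonneg (hT : 0 ≤ T) : 0 ≤ firstPassageTime A T θ :=
  le_csInf ⟨T, Or.inr rfl⟩ <| by rintro t (⟨ht, -⟩ | rfl) <;> simp_all

lemma firstPassageTime_eq_or_le_apply (hA : Continuous A) :
    firstPassageTime A T θ = T ∨ θ ≤ A (firstPassageTime A T θ) := by
  have hclosed : IsClosed ({t | t ∈ Icc (0 : ℝ) T ∧ θ ≤ A t} ∪ {T}) :=
    (isClosed_Icc.inter (isClosed_le continuous_const hA)).union isClosed_singleton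
  rcases hclosed.csInf_mem ⟨T, Or.inr rfl⟩ bddBelow_firstPassageSet with h | h
  · exact Or.inr h.2
  · exact Or.inl h

lemma firstPassageTime_le_iff (hA : Continuous A) (hs0 : 0 ≤ s) (hsT : s < T) :
    firstPassageTime A T θ ≤ s ↔ θ ≤ A s := by
  refine ⟨fun hle => ?_, fun hθ => firstPassageTime_le_of_le ⟨hs0, hsT.le⟩ hθ⟩
  rcases firstPassageTime_eq_or_le_apply (T := T) (θ := θ) hA with h | h
  · exact absurd (h ▸ hle) hsT.not_ge
  · exact h.trans (A.mono hle)

lemma apply_firstPassageTime (hT : 0 ≤ T) (hA : Continuous A) (hA0 : A 0 = 0) (hθ0 : 0 ≤ θ)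
    (hθT : θ ≤ A T) : A (firstPassageTime A T θ) = θ := by
  have hle : θ ≤ A (firstPassageTime A T θ) :=
    (firstPassageTime_eq_or_le_apply hA).elim (fun h => h ▸ hθT) id
  obtain ⟨s, hs, hAs⟩ : θ ∈ A '' Icc 0 (firstPassageTime A T θ) :=
    intermediate_value_Icc (firstPassageTime_nonneg hT) hA.continuousOn ⟨hA0.symm ▸ hθ0, hle⟩
  have hτs : firstPassageTime A T θ ≤ s :=
    firstPassageTime_le_of_le ⟨hs.1, hs.2.trans firstPassageTime_le⟩ hAs.ge
  rw [le_antisymm hτs hs.2, hAs]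

lemma firstPassageTime_of_lt (hθT : A T < θ) : firstPassageTime A T θ = T := by
  refine le_antisymm firstPassageTime_le (le_csInf ⟨T, Or.inr rfl⟩ ?_)
  rintro t (⟨ht, hθt⟩ | rfl)
  · exact absurd (hθt.trans (A.mono ht.2)) hθT.not_ge
  · exact le_rfl

lemma monotone_firstPassageTime : Monotone (firstPassageTime A T) := by
  intro a b hab
  refine csInf_le_csInf bddBelow_firstPassageSet ⟨T, Or.inr rfl⟩ ?_
  rintro t (⟨ht, hbt⟩ | h)
  · exact Or.inl ⟨ht, hab.trans hbt⟩
  · exact Or.inr h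

lemma map_firstPassageTime_volume (hT : 0 ≤ T) (hA : Continuous A) (hA0 : A 0 = 0) :
    (volume.restrict (Ioc 0 (A T))).map (firstPassageTime A T)
      = A.measure.restrict (Ioc 0 T) := by
  have hmeas : Measurable (firstPassageTime A T) := monotone_firstPassageTime.measurable
  have hAT : 0 ≤ A T := hA0 ▸ A.mono hT
  have : IsFiniteMeasure (volume.restrict (Ioc 0 (A T))) :=
    isFiniteMeasure_restrict.2 measure_Ioc_lt_top.ne
  refine Measure.ext_of_Iic _ _ fun s => ?_
  rw [Measure.map_apply hmeas measurableSet_Iic, Measure.restrict_apply (hmeas measurableSet_Iic),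
    Measure.restrict_apply measurableSet_Iic]
  rcases lt_or_ge s 0 with hs0 | hs0
  · have hempty : firstPassageTime A T ⁻¹' Iic s = ∅ :=
      eq_empty_of_forall_notMem fun θ hθ => (hs0.trans_le (firstPassageTime_nonneg hT)).not_ge hθ
    rw [hempty, empty_inter, Iic_inter_Ioc_of_le (hs0.le.trans hT), Ioc_eq_empty (not_lt.2 hs0.le),
      measure_empty, measure_empty]
  rcases lt_or_ge s T with hsT | hsT
  · have hpre : firstPassageTime A T ⁻¹' Iic s ∩ Ioc 0 (A T) = Ioc 0 (A s) := by
      ext θ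
      simp only [mem_inter_iff, mem_preimage, mem_Iic, mem_Ioc, firstPassageTime_le_iff hA hs0 hsT]
      exact ⟨fun h => ⟨h.2.1, h.1⟩, fun h => ⟨h.2, h.1, h.2.trans (A.mono hsT.le)⟩⟩
    rw [hpre, Iic_inter_Ioc_of_le hsT.le, Real.volume_Ioc, A.measure_Ioc, hA0, sub_zero]
  · have huniv : firstPassageTime A T ⁻¹' Iic s = univ :=
      eq_univ_of_forall fun θ => firstPassageTime_le.trans hsT
    rw [huniv, univ_inter, inter_eq_right.2 (Ioc_subset_Iic_self.trans (Iic_subset_Iic.2 hsT)),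
      Real.volume_Ioc, A.measure_Ioc, hA0]

lemma measurable_firstPassageTime_uncurry {β : Type*} {mβ : MeasurableSpace β}
    {A : β → StieltjesFunction ℝ} (hT : 0 ≤ T) (hA : ∀ b, Continuous (A b))
    (hAmeas : ∀ t, Measurable fun b => A b t) :
    Measurable fun p : ℝ × β => firstPassageTime (A p.2) T p.1 := by
  refine measurable_of_Iic fun s => ?_
  rcases lt_or_ge s 0 with hs0 | hs0
  · convert MeasurableSet.empty
    exact eq_empty_of_forall_notMem fun p hp =>
      (hs0.trans_le (firstPassageTime_nonneg hT)).not_ge hp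
  rcases lt_or_ge s T with hsT | hsT
  · have hpre : (fun p : ℝ × β => firstPassageTime (A p.2) T p.1) ⁻¹' Iic s
        = {p | p.1 ≤ A p.2 s} := by
      ext p
      exact firstPassageTime_le_iff (hA p.2) hs0 hsT
    rw [hpre]
    exact measurableSet_le measurable_fst ((hAmeas s).comp measurable_snd)
  · convert MeasurableSet.univ
    exact eq_univ_of_forall fun p => firstPassageTime_le.trans hsT

lemma integral_expMeasure_firstPassageTime (hT : 0 ≤ T) (hA : Continuous A) (hA0 : A 0 = 0)
    {f : ℝ → ℝ} (hf : Continuous f) :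
    ∫ θ, f (firstPassageTime A T θ) ∂expMeasure 1
      = (∫ u in Ioc 0 T, f u * exp (-A u) ∂A.measure) + f T * exp (-A T) := by
  have hmeas : Measurable (firstPassageTime A T) := monotone_firstPassageTime.measurable
  have hAT : 0 ≤ A T := hA0 ▸ A.mono hT
  obtain ⟨B, hB⟩ := isCompact_Icc.exists_bound_of_continuousOn (hf.continuousOn (s := Icc 0 T))
  have hint : IntegrableOn (fun θ => exp (-θ) * f (firstPassageTime A T θ)) (Ioi 0) := by
    refine Integrable.mul_bdd (c := B) ?_ (hf.measurable.comp hmeas).aestronglyMeasurable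
      (ae_of_all _ fun θ => hB _ ⟨firstPassageTime_nonneg hT, firstPassageTime_le⟩)
    simpa [IntegrableOn] using exp_neg_integrableOn_Ioi 0 one_pos
  rw [integral_expMeasure one_pos, integral_Ici_eq_integral_Ioi]
  simp only [one_mul, smul_eq_mul]
  rw [← Ioc_union_Ioi_eq_Ioi hAT, setIntegral_union (Ioc_disjoint_Ioi le_rfl) measurableSet_Ioi
    (hint.mono_set Ioc_subset_Ioi_self) (hint.mono_set (Ioi_subset_Ioi hAT))]
  congr 1
  · calc ∫ θ in Ioc 0 (A T), exp (-θ) * f (firstPassageTime A T θ)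
        = ∫ θ in Ioc 0 (A T), (fun u => f u * exp (-A u)) (firstPassageTime A T θ) :=
          setIntegral_congr_fun measurableSet_Ioc fun θ hθ => by
            dsimp only
            rw [apply_firstPassageTime hT hA hA0 hθ.1.le hθ.2, mul_comm]
      _ = ∫ u, f u * exp (-A u) ∂(volume.restrict (Ioc 0 (A T))).map (firstPassageTime A T) :=
          (integral_map hmeas.aemeasurable (hf.mul hA.neg.rexp).aestronglyMeasurable).symm
      _ = ∫ u in Ioc 0 T, f u * exp (-A u) ∂A.measure := by
          rw [map_firstPassageTime_volume hT hA hA0]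
  · calc ∫ θ in Ioi (A T), exp (-θ) * f (firstPassageTime A T θ)
        = ∫ θ in Ioi (A T), exp (-θ) * f T :=
          setIntegral_congr_fun measurableSet_Ioi fun θ hθ => by rw [firstPassageTime_of_lt hθ]
      _ = f T * exp (-A T) := by rw [integral_mul_const, integral_exp_neg_Ioi, mul_comm]

end FirstPassageTime

theorem randomized_stopping_reward_general
    {Ω : Type*} {m0 : MeasurableSpace Ω} (μ : Measure Ω) [IsProbabilityMeasure μ]
    (T : ℝ) (hT : 0 < T)
    (Θ : Ω → ℝ) (hΘmeas : Measurable Θ) (hΘlaw : μ.map Θ = expMeasure 1)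
    (𝒢 : MeasurableSpace Ω) (h𝒢 : 𝒢 ≤ m0)
    (hΘindep : Indep (MeasurableSpace.comap Θ inferInstance) 𝒢 μ)
    (A : Ω → StieltjesFunction ℝ)
    (hA0 : ∀ ω, A ω 0 = 0)
    (hAcont : ∀ ω, Continuous (A ω))
    (hAmeas : ∀ t : ℝ, Measurable[𝒢] (fun ω => A ω t))
    (h : Ω → ℝ → ℝ)
    (hhmeas : ∀ t : ℝ, Measurable[𝒢] (fun ω => h ω t))
    (hhcont : ∀ ω, Continuous (h ω))
    (hhbdd : ∃ B : ℝ, ∀ ω t, |h ω t| ≤ B)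
    (τ : Ω → ℝ)
    (hτ : ∀ ω, τ ω =
      sInf ({t | t ∈ Set.Icc (0 : ℝ) T ∧ Θ ω ≤ A ω t} ∪ {T})) :
    ∫ ω, h ω (τ ω) ∂μ
      = ∫ ω, ((∫ u in Set.Ioc (0 : ℝ) T, h ω u * Real.exp (-(A ω u)) ∂((A ω).measure))
          + h ω T * Real.exp (-(A ω T))) ∂μ := by
  obtain ⟨B, hB⟩ := hhbdd
  have hindep := (IndepFun_iff_Indep (mγ := 𝒢) Θ id μ).2 (by rwa [MeasurableSpace.comap_id])
  have hF := (measurable_uncurry_of_continuous_of_measurable (m := 𝒢) hhcont hhmeas).comp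
    ((measurable_firstPassageTime_uncurry (mβ := 𝒢) hT.le hAcont hAmeas).prodMk measurable_snd)
  have hfreeze := hindep.integral_comp_prodMk hΘmeas.aemeasurable
    (measurable_id'' h𝒢).aemeasurable
    ((integrable_const B).mono' hF.aestronglyMeasurable (ae_of_all _ fun p => hB _ _))
  calc ∫ ω, h ω (τ ω) ∂μ = ∫ ω, ∫ θ, h ω (firstPassageTime (A ω) T θ) ∂expMeasure 1 ∂μ := by
        rw [← hΘlaw, show τ = fun ω => firstPassageTime (A ω) T (Θ ω) from funext hτ]
        exact hfreeze
    _ = _ := integral_congr_ae (ae_of_all _ fun ω =>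
        integral_expMeasure_firstPassageTime hT.le (hAcont ω) (hA0 ω) (hhcont ω))

/-- Randomized-stopping expectation identity: with `Θ ~ Exp(1)` independent of `𝒢`,
`A` a `𝒢`-measurable continuous nondecreasing process with `A 0 = 0`, and
`τ = inf{t ∈ [0,T] : A t ≥ Θ} ∧ T`, for a bounded `𝒢`-measurable process `h`
continuous in `t`, one has
`E[h(τ)] = E[∫₀ᵀ h(u)·e^{−A(u)} dA(u) + h(T)·e^{−A(T)}]`,
the inner integral being the Lebesgue–Stieltjes integral against `A`. -/
theorem randomized_stopping_reward
    {Ω : Type*} {m0 : MeasurableSpace Ω} (μ : Measure Ω) [IsProbabilityMeasure μ]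
    (T : ℝ) (hT : 0 < T)
    (Θ : Ω → ℝ) (hΘmeas : Measurable Θ) (hΘlaw : μ.map Θ = expMeasure 1)
    (𝒢 : MeasurableSpace Ω) (h𝒢 : 𝒢 ≤ m0)
    (hΘindep : Indep (MeasurableSpace.comap Θ inferInstance) 𝒢 μ)
    (A : Ω → StieltjesFunction ℝ)
    (hA0 : ∀ ω, A ω 0 = 0)
    (hAcont : ∀ ω, Continuous (A ω))
    (hAnonneg : ∀ ω t, 0 ≤ A ω t)
    (hAmeas : ∀ t : ℝ, Measurable[𝒢] (fun ω => A ω t))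
    (h : Ω → ℝ → ℝ)
    (hhmeas : ∀ t : ℝ, Measurable[𝒢] (fun ω => h ω t))
    (hhcont : ∀ ω, Continuous (h ω))
    (hhbdd : ∃ B : ℝ, ∀ ω t, |h ω t| ≤ B)
    (τ : Ω → ℝ)
    (hτ : ∀ ω, τ ω =
      sInf ({t | t ∈ Set.Icc (0 : ℝ) T ∧ Θ ω ≤ A ω t} ∪ {T})) :
    ∫ ω, h ω (τ ω) ∂μ
      = ∫ ω, ((∫ u in Set.Ioc (0 : ℝ) T, h ω u * Real.exp (-(A ω u)) ∂((A ω).measure))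
          + h ω T * Real.exp (-(A ω T))) ∂μ :=
  randomized_stopping_reward_general μ T hT Θ hΘmeas hΘlaw 𝒢 h𝒢 hΘindep A hA0 hAcont hAmeas h hhmeas
    hhcont hhbdd τ hτ
end

section
/- Let u, v : ℝ → ℝ be bounded with u(x), v(x) ≥ h(x) − M for all x, where h is bounded and M ≥ 0, and λ > 0. Define π_u(x) = exp(−(u(x)−h(x))/λ) and π_v(x) likewise, and H(x, w, π) = (h(x) − w)π + λ(π − π log π). Then sup_x |H(x, u(x), π_v(x)) − H(x, u(x), π_u(x))| ≤ C·e^{M/λ}·sup_x |u(x) − v(x)| for a constant C depending only on M and λ polynomially (C = 1 + M/λ suffices up to a factor). -/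
open Real

/-!
Writing `π_w = exp (-(w - c)/λ)` for the Gibbs policy of the value `w` at a point where `h = c`,
the identity `log π_w = -(w - c)/λ` collapses the Hamiltonian to `H(u, π_v) = π_v (λ + v - u)`.
With `t = (u - v)/λ` and `π_v = π_u eᵗ` the gap becomes `λ π_u (eᵗ (1 - t) - 1)`, and the
elementary bound `|eᵗ (1 - t) - 1| ≤ max 1 eᵗ · |t|` gives
`|H(u, π_v) - H(u, π_u)| ≤ max π_u π_v · |u - v|`.
Finally `u, v ≥ h - M` bounds both policies by `e^{M/λ}`, so the constant `c = 1` already works.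
-/

noncomputable def entropyHamiltonian (lam c w q : ℝ) : ℝ := (c - w) * q + lam * (q - q * log q)

noncomputable def gibbsPolicy (lam c w : ℝ) : ℝ := exp (-(w - c) / lam)

lemma abs_exp_mul_one_sub_sub_one_le (t : ℝ) : |exp t * (1 - t) - 1| ≤ max 1 (exp t) * |t| := by
  have hle : exp t * (1 - t) ≤ 1 := by
    calc exp t * (1 - t) ≤ exp t * exp (-t) := by gcongr; linarith [add_one_le_exp (-t)]
      _ = 1 := by rw [← exp_add, add_neg_cancel, exp_zero]
  rw [abs_of_nonpos (sub_nonpos.2 hle)]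
  rcases le_total 0 t with ht | ht
  · rw [abs_of_nonneg ht]
    have := one_le_exp ht
    nlinarith [le_max_right 1 (exp t)]
  · rw [abs_of_nonpos ht]
    have := add_one_le_exp t
    nlinarith [le_max_left 1 (exp t), exp_pos t]

lemma entropyHamiltonian_gibbsPolicy {lam : ℝ} (hlam : lam ≠ 0) (c w v : ℝ) :
    entropyHamiltonian lam c w (gibbsPolicy lam c v) = gibbsPolicy lam c v * (lam + v - w) := by
  unfold entropyHamiltonian gibbsPolicy
  rw [log_exp]
  field_simp
  ring

lemma gibbsPolicy_eq_mul_exp {lam : ℝ} (hlam : lam ≠ 0) (c u v : ℝ) :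
    gibbsPolicy lam c v = gibbsPolicy lam c u * exp ((u - v) / lam) := by
  unfold gibbsPolicy
  rw [← exp_add]
  congr 1
  field_simp
  ring

lemma abs_entropyHamiltonian_gibbsPolicy_sub_le {lam : ℝ} (hlam : 0 < lam) (c u v : ℝ) :
    |entropyHamiltonian lam c u (gibbsPolicy lam c v) -
        entropyHamiltonian lam c u (gibbsPolicy lam c u)|
      ≤ max (gibbsPolicy lam c u) (gibbsPolicy lam c v) * |u - v| := by
  have hpu : 0 < gibbsPolicy lam c u := exp_pos _
  have hut : u - v = lam * ((u - v) / lam) := by field_simp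
  rw [entropyHamiltonian_gibbsPolicy hlam.ne', entropyHamiltonian_gibbsPolicy hlam.ne',
    gibbsPolicy_eq_mul_exp hlam.ne' c u v]
  generalize (u - v) / lam = t at hut ⊢
  calc |gibbsPolicy lam c u * exp t * (lam + v - u) - gibbsPolicy lam c u * (lam + u - u)|
      = gibbsPolicy lam c u * lam * |exp t * (1 - t) - 1| := by
        rw [← abs_of_pos (mul_pos hpu hlam), ← abs_mul]
        congr 1
        linear_combination -(gibbsPolicy lam c u * exp t) * hut
    _ ≤ gibbsPolicy lam c u * lam * (max 1 (exp t) * |t|) := by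
        gcongr; exact abs_exp_mul_one_sub_sub_one_le t
    _ = max (gibbsPolicy lam c u) (gibbsPolicy lam c u * exp t) * |u - v| := by
        have hmax : max (gibbsPolicy lam c u) (gibbsPolicy lam c u * exp t)
            = gibbsPolicy lam c u * max 1 (exp t) := by
          rw [mul_max_of_nonneg _ _ hpu.le, mul_one]
        rw [hmax, hut, abs_mul, abs_of_pos hlam]
        ring

lemma gibbsPolicy_le_exp {lam M c w : ℝ} (hlam : 0 < lam) (hw : c - M ≤ w) :
    gibbsPolicy lam c w ≤ exp (M / lam) :=
  exp_le_exp.2 (by rw [neg_div, neg_le, ← neg_div]; gcongr; linarith)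

theorem hamiltonian_policy_lipschitz_general (lam M : ℝ) (hlam : 0 < lam) (hM : 0 ≤ M)
    (h u v : ℝ → ℝ)
    (hubdd : ∃ B : ℝ, ∀ x, |u x| ≤ B)
    (hvbdd : ∃ B : ℝ, ∀ x, |v x| ≤ B)
    (hu : ∀ x, h x - M ≤ u x) (hv : ∀ x, h x - M ≤ v x) :
    let H : ℝ → ℝ → ℝ → ℝ := fun x w q => (h x - w) * q + lam * (q - q * Real.log q)
    let polu : ℝ → ℝ := fun x => Real.exp (-(u x - h x) / lam)
    let polv : ℝ → ℝ := fun x => Real.exp (-(v x - h x) / lam)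
    ∃ c : ℝ, 0 < c ∧ c ≤ 2 * (1 + M / lam) ∧
      ∀ x : ℝ, |H x (u x) (polv x) - H x (u x) (polu x)|
        ≤ c * Real.exp (M / lam) * ⨆ y : ℝ, |u y - v y| := by
  intro H polu polv
  obtain ⟨Bu, hBu⟩ := hubdd
  obtain ⟨Bv, hBv⟩ := hvbdd
  have hbdd : BddAbove (Set.range fun y => |u y - v y|) := by
    refine ⟨Bu + Bv, Set.forall_mem_range.2 fun y => ?_⟩
    exact (abs_sub _ _).trans (add_le_add (hBu y) (hBv y))
  refine ⟨1, one_pos, by linarith [div_nonneg hM hlam.le], fun x => ?_⟩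
  calc |H x (u x) (polv x) - H x (u x) (polu x)|
      ≤ max (polu x) (polv x) * |u x - v x| :=
        abs_entropyHamiltonian_gibbsPolicy_sub_le hlam (h x) (u x) (v x)
    _ ≤ 1 * exp (M / lam) * ⨆ y, |u y - v y| := by
        rw [one_mul]
        gcongr
        · exact max_le (gibbsPolicy_le_exp hlam (hu x)) (gibbsPolicy_le_exp hlam (hv x))
        · exact le_ciSup hbdd x

/-- Key Lipschitz estimate for policy iteration: with the entropy-regularized
Hamiltonian `H(x, w, q) = (h x − w)q + λ(q − q·log q)` and greedy policies
`π_u(x) = exp(−(u x − h x)/λ)`, the Hamiltonian loss from using the policy of `v`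
instead of that of `u` is bounded by `C·e^{M/λ}·sup_x |u x − v x|`. -/
theorem hamiltonian_policy_lipschitz (lam M : ℝ) (hlam : 0 < lam) (hM : 0 ≤ M)
    (h u v : ℝ → ℝ)
    (hhbdd : ∃ B : ℝ, ∀ x, |h x| ≤ B)
    (hubdd : ∃ B : ℝ, ∀ x, |u x| ≤ B)
    (hvbdd : ∃ B : ℝ, ∀ x, |v x| ≤ B)
    (hu : ∀ x, h x - M ≤ u x) (hv : ∀ x, h x - M ≤ v x) :
    let H : ℝ → ℝ → ℝ → ℝ := fun x w q => (h x - w) * q + lam * (q - q * Real.log q)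
    let polu : ℝ → ℝ := fun x => Real.exp (-(u x - h x) / lam)
    let polv : ℝ → ℝ := fun x => Real.exp (-(v x - h x) / lam)
    ∃ c : ℝ, 0 < c ∧ c ≤ 2 * (1 + M / lam) ∧
      ∀ x : ℝ, |H x (u x) (polv x) - H x (u x) (polu x)|
        ≤ c * Real.exp (M / lam) * ⨆ y : ℝ, |u y - v y| :=
  hamiltonian_policy_lipschitz_general lam M hlam hM h u v hubdd hvbdd hu hv
end
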